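/- arXiv:0906.1518 — 2 statements merged into one kernel-verified Lean document; each statement's English description precedes it below -/
import Mathlib

section
/- Let k be a field, let V be a finite-dimensional graded k-vector space with homogeneous basis v₁,…,v_r, each v_i of odd positive degree, and let d be the degree −1 derivation on the tensor algebra T(V) determined by dv₁ = 0, dv₂ = 0 and dv_i = Σ_{j,k} α^i_{jk} v_j ⊗ v_k for i ≥ 3, where the scalars α^i_{jk} ∈ k satisfy α^i_{12} = α^i_{21} = 0 for all i, and assume d∘d = 0. Let (Q,δ) be the complex Q = T(V) ⊕ (T(V) ⊗ s̄V), where s̄V has basis v̄₁,…,v̄_r with |v̄_i| = |v_i| + 1, δ restricted to T(V) equals d, and for a ∈ T(V) homogeneous and v ∈ V with dv = Σ λ_{jk} v_j ⊗ v_k one has δ(a ⊗ v̄) = da ⊗ v̄ + (−1)^{|a|}(a v − (−1)^{|v||a|} v a) + (−1)^{|a|} Σ_{j,k} λ_{jk} a v_j ⊗ v̄_k − Σ_{j,k} λ_{jk} v_k a ⊗ v̄_j. For n ≥ 1 let X_n = v₁⊗v₂⊗v₁⊗⋯⊗v₁ ⊗ v̄₂ − v₂⊗v₁⊗v₂⊗⋯⊗v₂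 ⊗ v̄₁ (alternating words of tensor length 2n−1 in the T(V) factor, the first beginning and ending with v₁, the second with v₂). Then δ(X_n) = 0. -/
/-! Write `wₛₜ` for the alternating word `vₛvₜvₛ⋯vₛ` of odd length `2n − 1`. Since `dv₁ = dv₂ = 0`
and the structure constants `α¹, α²` vanish, the Leibniz rule makes `wₛₜ` a `d`-cycle and
`δ(wₛₜ ⊗ v̄ₜ)` reduces to `−(wₛₜ vₜ + vₜ wₛₜ) = −(vₛ wₜₛ + vₜ wₛₜ)`. This is symmetric in `s, t`,
so the two summands of `X_n` have the same image. -/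

noncomputable section

/-- The tensor algebra `T(V)` on a graded vector space `V` with basis `v₀,…,v_{r-1}`,
modelled as the free algebra on `Fin r`. -/
abbrev TV (k : Type) [Field k] (r : ℕ) : Type := FreeAlgebra k (Fin r)

variable (k : Type) [Field k] (r : ℕ)

/-- The degree-`m` homogeneous component of `T(V)`, where the generator `vᵢ` has degree
`deg i`: the span of the words of total degree `m`. -/
def Tgr (deg : Fin r → ℕ) (m : ℕ) : Submodule k (TV k r) :=
  Submodule.span k {x | ∃ w : List (Fin r), (w.map deg).sum = m ∧
    x = (w.map (FreeAlgebra.ι k)).prod}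

/-- The sign involution `a ↦ (−1)^{|a|} a` of `T(V)` (all generators have odd degree),
i.e. the algebra map determined by `vᵢ ↦ −vᵢ`. -/
def sgn : TV k r →ₐ[k] TV k r := FreeAlgebra.lift k (fun i => -(FreeAlgebra.ι k i))

/-- The complex `Q = T(V) ⊕ (T(V) ⊗ s̄V)`, where `T(V) ⊗ s̄V` is encoded as the space of
(finitely many) coordinates `g : Fin r → T(V)`, `g i` being the coefficient of `v̄ᵢ`. -/
abbrev QC : Type := TV k r × (Fin r → TV k r)

/-- The differential `δ` of the complex `Q`: it restricts to `d` on `T(V)`, and on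
`a ⊗ v̄ᵢ` (with `d vᵢ = Σ_{j,l} α i j l · vⱼ ⊗ v_l`) it is given by
`δ(a ⊗ v̄ᵢ) = d a ⊗ v̄ᵢ + ((−1)^{|a|} a vᵢ − vᵢ a)
  + Σ_{j,l} α i j l · ((−1)^{|a|} a vⱼ) ⊗ v̄_l − Σ_{j,l} α i j l · (v_l a) ⊗ v̄ⱼ`,
the sign `(−1)^{|a|}` being implemented by the involution `sgn`. -/
def deltaQ (d : TV k r →ₗ[k] TV k r) (α : Fin r → Fin r → Fin r → k) :
    QC k r →ₗ[k] QC k r :=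
  LinearMap.prod
    (d ∘ₗ LinearMap.fst k (TV k r) (Fin r → TV k r) +
      ∑ i : Fin r,
        (LinearMap.mulRight k (FreeAlgebra.ι k i) ∘ₗ (sgn k r).toLinearMap ∘ₗ
            LinearMap.proj i ∘ₗ LinearMap.snd k (TV k r) (Fin r → TV k r)
         - LinearMap.mulLeft k (FreeAlgebra.ι k i) ∘ₗ
            LinearMap.proj i ∘ₗ LinearMap.snd k (TV k r) (Fin r → TV k r)))
    (LinearMap.pi fun t =>
      d ∘ₗ LinearMap.proj t ∘ₗ LinearMap.snd k (TV k r) (Fin r → TV k r)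
      + ∑ i : Fin r, ∑ j : Fin r, α i j t •
          (LinearMap.mulRight k (FreeAlgebra.ι k j) ∘ₗ (sgn k r).toLinearMap ∘ₗ
            LinearMap.proj i ∘ₗ LinearMap.snd k (TV k r) (Fin r → TV k r))
      - ∑ i : Fin r, ∑ l : Fin r, α i t l •
          (LinearMap.mulLeft k (FreeAlgebra.ι k l) ∘ₗ
            LinearMap.proj i ∘ₗ LinearMap.snd k (TV k r) (Fin r → TV k r)))

/-- The alternating word `v_s v_t v_s v_t ⋯` of length `len` in `T(V)`. -/
def altWord (s t : Fin r) (len : ℕ) : TV k r :=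
  (((List.range len).map fun j => if j % 2 = 0 then s else t).map (FreeAlgebra.ι k)).prod

/-- The cycle `X_n = v₁v₂v₁⋯v₁ ⊗ v̄₂ − v₂v₁v₂⋯v₂ ⊗ v̄₁` (alternating words of length
`2n−1`), an element of `T(V) ⊗ s̄V ⊆ Q`.  Here `v₁, v₂` are the generators of index `0, 1`. -/
def Xcyc (hr : 2 ≤ r) (n : ℕ) : QC k r :=
  (0, fun u =>
    if u = (⟨1, by omega⟩ : Fin r) then
      altWord k r ⟨0, by omega⟩ ⟨1, by omega⟩ (2 * n - 1)
    else if u = (⟨0, by omega⟩ : Fin r) then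
      -(altWord k r ⟨1, by omega⟩ ⟨0, by omega⟩ (2 * n - 1))
    else 0)

section

variable {k r}

theorem ι_mem_Tgr (deg : Fin r → ℕ) (i : Fin r) : FreeAlgebra.ι k i ∈ Tgr k r deg (deg i) :=
  Submodule.subset_span ⟨[i], by simp⟩

theorem one_mem_Tgr (deg : Fin r → ℕ) : (1 : TV k r) ∈ Tgr k r deg 0 :=
  Submodule.subset_span ⟨[], by simp⟩

def IsGradedDerivation (deg : Fin r → ℕ) (d : TV k r →ₗ[k] TV k r) : Prop :=
  ∀ m : ℕ, ∀ a ∈ Tgr k r deg m, ∀ b : TV k r, d (a * b) = d a * b + ((-1 : k) ^ m) • (a * d b)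

namespace IsGradedDerivation

variable {deg : Fin r → ℕ} {d : TV k r →ₗ[k] TV k r}

theorem map_one (hd : IsGradedDerivation deg d) : d 1 = 0 := by
  simpa using hd 0 1 (one_mem_Tgr deg) 1

theorem map_list_prod_eq_zero (hd : IsGradedDerivation deg d) (w : List (Fin r))
    (hw : ∀ i ∈ w, d (FreeAlgebra.ι k i) = 0) : d (w.map (FreeAlgebra.ι k)).prod = 0 := by
  induction w with
  | nil => exact hd.map_one
  | cons a w ih =>
    rw [List.map_cons, List.prod_cons, hd _ _ (ι_mem_Tgr deg a), hw a List.mem_cons_self,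
      ih fun i hi => hw i (List.mem_cons_of_mem a hi)]
    simp

end IsGradedDerivation

@[simp]
theorem sgn_ι (i : Fin r) : sgn k r (FreeAlgebra.ι k i) = -FreeAlgebra.ι k i := by
  simp [sgn]

theorem sgn_list_prod (w : List (Fin r)) :
    sgn k r (w.map (FreeAlgebra.ι k)).prod =
      (-1 : k) ^ w.length • (w.map (FreeAlgebra.ι k)).prod := by
  induction w with
  | nil => simp
  | cons a w ih => simp [ih, pow_succ, mul_comm]

theorem sgn_altWord (s t : Fin r) (len : ℕ) :
    sgn k r (altWord k r s t len) = (-1 : k) ^ len • altWord k r s t len := by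
  rw [altWord, sgn_list_prod, List.length_map, List.length_range]

theorem altWord_succ (s t : Fin r) (len : ℕ) :
    altWord k r s t (len + 1) =
      altWord k r s t len * FreeAlgebra.ι k (if len % 2 = 0 then s else t) := by
  simp [altWord, List.range_succ]

theorem altWord_succ' (s t : Fin r) (len : ℕ) :
    altWord k r s t (len + 1) = FreeAlgebra.ι k s * altWord k r t s len := by
  simp only [altWord, List.range_succ_eq_map, List.map_cons, List.map_map, List.prod_cons,
    Nat.zero_mod, if_true]
  congr 2
  refine List.map_congr_left fun j _ => ?_
  rcases Nat.mod_two_eq_zero_or_one j with h | h <;> simp [Nat.add_mod, h]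

theorem altWord_mul_ι_of_odd (s t : Fin r) {len : ℕ} (hlen : Odd len) :
    altWord k r s t len * FreeAlgebra.ι k t = FreeAlgebra.ι k s * altWord k r t s len := by
  rw [← altWord_succ', altWord_succ, if_neg (Nat.odd_iff.mp hlen ▸ one_ne_zero)]

theorem IsGradedDerivation.map_altWord_eq_zero {deg : Fin r → ℕ} {d : TV k r →ₗ[k] TV k r}
    (hd : IsGradedDerivation deg d) {s t : Fin r} (hs : d (FreeAlgebra.ι k s) = 0)
    (ht : d (FreeAlgebra.ι k t) = 0) (len : ℕ) : d (altWord k r s t len) = 0 := by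
  refine hd.map_list_prod_eq_zero _ fun i hi => ?_
  obtain ⟨j, -, rfl⟩ := List.mem_map.mp hi
  split <;> assumption

theorem deltaQ_single (d : TV k r →ₗ[k] TV k r) (α : Fin r → Fin r → Fin r → k) (i : Fin r)
    (a : TV k r) :
    deltaQ k r d α (0, Pi.single i a) =
      (sgn k r a * FreeAlgebra.ι k i - FreeAlgebra.ι k i * a,
        Pi.single i (d a) + fun t => ∑ j, α i j t • (sgn k r a * FreeAlgebra.ι k j) -
          ∑ l, α i t l • (FreeAlgebra.ι k l * a)) := by
  ext t
  · simp [deltaQ, Pi.single_apply, apply_ite (sgn k r), ite_mul]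
  · simp [deltaQ, Pi.single_apply, apply_ite d, apply_ite (sgn k r), ite_mul, smul_ite,
      Finset.sum_ite_irrel, add_sub_assoc]

theorem deltaQ_single_altWord {deg : Fin r → ℕ} {d : TV k r →ₗ[k] TV k r}
    {α : Fin r → Fin r → Fin r → k} {s t : Fin r} {len : ℕ} (hd : IsGradedDerivation deg d)
    (hs : d (FreeAlgebra.ι k s) = 0) (ht : d (FreeAlgebra.ι k t) = 0) (hα : ∀ j l, α t j l = 0)
    (hlen : Odd len) :
    deltaQ k r d α (0, Pi.single t (altWord k r s t len)) =
      (-(FreeAlgebra.ι k s * altWord k r t s len + FreeAlgebra.ι k t * altWord k r s t len),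
        0) := by
  rw [deltaQ_single, hd.map_altWord_eq_zero hs ht, sgn_altWord, hlen.neg_one_pow, neg_one_smul,
    neg_mul, altWord_mul_ι_of_odd s t hlen]
  refine Prod.ext (neg_add' _ _).symm (funext fun u => ?_)
  simp [hα]

end

theorem Xcyc_eq (hr : 2 ≤ r) (n : ℕ) :
    Xcyc k r hr n =
      (0, Pi.single ⟨1, by omega⟩ (altWord k r ⟨0, by omega⟩ ⟨1, by omega⟩ (2 * n - 1))) -
      (0, Pi.single ⟨0, by omega⟩ (altWord k r ⟨1, by omega⟩ ⟨0, by omega⟩ (2 * n - 1))) := by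
  ext u
  · simp [Xcyc]
  · simp only [Xcyc, Prod.snd_sub, Pi.sub_apply, Pi.single_apply]
    split_ifs <;> simp_all [Fin.ext_iff]

/-- Let `V` have homogeneous basis `v₁,…,v_r` of odd positive degrees and
let `d` be the degree `−1` derivation of `T(V)` with `dv₁ = dv₂ = 0` and
`dvᵢ = Σ_{j,l} α^i_{jl} vⱼ ⊗ v_l`, where `α^i_{12} = α^i_{21} = 0` for all `i` and
`d ∘ d = 0`.  Then the elements `X_n ∈ Q = T(V) ⊕ (T(V) ⊗ s̄V)` are cycles: `δ(X_n) = 0`. -/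
theorem deltaQ_Xcyc_eq_zero
    (k : Type) [Field k] (r : ℕ) (hr : 2 ≤ r)
    (deg : Fin r → ℕ)
    (d : TV k r →ₗ[k] TV k r) (α : Fin r → Fin r → Fin r → k)
    (hd1 : d (FreeAlgebra.ι k (⟨0, by omega⟩ : Fin r)) = 0)
    (hd2 : d (FreeAlgebra.ι k (⟨1, by omega⟩ : Fin r)) = 0)
    (hα1 : ∀ j l, α ⟨0, by omega⟩ j l = 0)
    (hα2 : ∀ j l, α ⟨1, by omega⟩ j l = 0)
    (hLeib : ∀ m : ℕ, ∀ a ∈ Tgr k r deg m, ∀ b : TV k r,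
      d (a * b) = d a * b + ((-1 : k) ^ m) • (a * d b)) :
    ∀ n : ℕ, 1 ≤ n → deltaQ k r d α (Xcyc k r hr n) = 0 := by
  intro n hn
  have hodd : Odd (2 * n - 1) := ⟨n - 1, by omega⟩
  rw [Xcyc_eq, map_sub, deltaQ_single_altWord hLeib hd1 hd2 hα2 hodd,
    deltaQ_single_altWord hLeib hd2 hd1 hα1 hodd, add_comm, sub_self]
end
end

section
/- Let k be a field, let V be a finite-dimensional graded k-vector space with homogeneous basis v₁,…,v_r, each v_i of odd positive degree, and let d be the degree −1 derivation on the tensor algebra T(V) determined by dv₁ = 0, dv₂ = 0 and dv_i = Σ_{j,k} α^i_{jk} v_j ⊗ v_k for i ≥ 3, where the scalars α^i_{jk} ∈ k satisfy α^i_{12} = α^i_{21} = 0 for all i, and assume d∘d = 0. Let (Q,δ) be the complex Q = T(V) ⊕ (T(V) ⊗ s̄V), where s̄V has basis v̄₁,…,v̄_r with |v̄_i| = |v_i| + 1, δ restricted to T(V) equals d, and for a ∈ T(V) homogeneous and v ∈ V with dv = Σ λ_{jk} v_j ⊗ v_k one has δ(a ⊗ v̄) = da ⊗ v̄ + (−1)^{|a|}(a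 v − (−1)^{|v||a|} v a) + (−1)^{|a|} Σ_{j,k} λ_{jk} a v_j ⊗ v̄_k − Σ_{j,k} λ_{jk} v_k a ⊗ v̄_j. For n ≥ 1 let X_n = v₁⊗v₂⊗v₁⊗⋯⊗v₁ ⊗ v̄₂ − v₂⊗v₁⊗v₂⊗⋯⊗v₂ ⊗ v̄₁ (alternating words of tensor length 2n−1 in the T(V) factor, the first beginning and ending with v₁, the second with v₂). Then X_n is not a boundary: there is no element Z ∈ Q with δ(Z) = X_n. -/
noncomputable section

variable (k : Type) [Field k] (r : ℕ)

/-! Read off the coefficient of the alternating word `w = v₁v₂⋯v₁` in the `v̄₂`-component of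
`δ Z`. Since `α^i_{12} = α^i_{21} = 0`, the Leibniz rule keeps the image of `d` inside the span
of the words containing an adjacent pair other than `v₁v₂` and `v₂v₁`, and `w` contains none.
The other terms of that component are words ending in `v_j` with coefficient `α^i_{j2}` or
beginning with `v_l` with coefficient `α^i_{2l}`; as `w` begins and ends with `v₁`, they could
only contribute through `α^i_{12}` or `α^i_{21}`. So the coefficient vanishes on every
boundary, whereas it is `1` in `X_n`. -/

namespace FreeAlgebra

variable {R : Type*} [CommSemiring R] {X : Type*}

theorem basisFreeMonoid_apply (w : FreeMonoid X) :
    basisFreeMonoid R X w = FreeMonoid.lift (ι R) w := by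
  simp [basisFreeMonoid, equivMonoidAlgebraFreeMonoid]

theorem basisFreeMonoid_mul (v w : FreeMonoid X) :
    basisFreeMonoid R X (v * w) = basisFreeMonoid R X v * basisFreeMonoid R X w := by
  simp only [basisFreeMonoid_apply, map_mul]

theorem equivMonoidAlgebraFreeMonoid_ι (i : X) :
    equivMonoidAlgebraFreeMonoid (ι R i) = MonoidAlgebra.single (FreeMonoid.of i) 1 := by
  simp [equivMonoidAlgebraFreeMonoid]

theorem basisFreeMonoid_repr_ι_mul_apply {L : FreeMonoid X} {j : X}
    (hj : L.toList.head? ≠ some j) (x : FreeAlgebra R X) :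
    (basisFreeMonoid R X).repr (ι R j * x) L = 0 := by
  show (equivMonoidAlgebraFreeMonoid (ι R j * x)).coeff L = 0
  rw [map_mul, equivMonoidAlgebraFreeMonoid_ι]
  refine MonoidAlgebra.coeff_single_mul_of_forall_mul_ne _ _ fun u hu => hj ?_
  simp [← hu]

theorem basisFreeMonoid_repr_mul_ι_apply {L : FreeMonoid X} {j : X}
    (hj : L.toList.getLast? ≠ some j) (x : FreeAlgebra R X) :
    (basisFreeMonoid R X).repr (x * ι R j) L = 0 := by
  show (equivMonoidAlgebraFreeMonoid (x * ι R j)).coeff L = 0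
  rw [map_mul, equivMonoidAlgebraFreeMonoid_ι]
  refine MonoidAlgebra.coeff_mul_single_of_forall_mul_ne _ _ fun u hu => hj ?_
  simp [← hu]

variable (R) in
def nonChainSpan (good : X → X → Prop) : Submodule R (FreeAlgebra R X) :=
  Submodule.span R (basisFreeMonoid R X '' {w | ¬ w.toList.IsChain good})

variable {good : X → X → Prop}

theorem basisFreeMonoid_mem_nonChainSpan {w : FreeMonoid X} (hw : ¬ w.toList.IsChain good) :
    basisFreeMonoid R X w ∈ nonChainSpan R good :=
  Submodule.subset_span ⟨w, hw, rfl⟩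

theorem repr_apply_eq_zero_of_mem_nonChainSpan {x : FreeAlgebra R X}
    (hx : x ∈ nonChainSpan R good) {L : FreeMonoid X} (hL : L.toList.IsChain good) :
    (basisFreeMonoid R X).repr x L = 0 := by
  suffices nonChainSpan R good ≤ LinearMap.ker ((basisFreeMonoid R X).coord L) from this hx
  refine Submodule.span_le.mpr ?_
  rintro _ ⟨w, hw, rfl⟩
  simp only [SetLike.mem_coe, LinearMap.mem_ker, Module.Basis.coord_apply,
    Module.Basis.repr_self]
  exact Finsupp.single_eq_of_ne (by rintro rfl; exact hw hL)

theorem mul_mem_nonChainSpan_left {x : FreeAlgebra R X} (hx : x ∈ nonChainSpan R good)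
    (y : FreeAlgebra R X) : y * x ∈ nonChainSpan R good := by
  induction hx using Submodule.span_induction with
  | mem _ hx =>
    obtain ⟨w, hw, rfl⟩ := hx
    induction (basisFreeMonoid R X).mem_span y using Submodule.span_induction with
    | mem _ hy =>
      obtain ⟨v, rfl⟩ := hy
      rw [← basisFreeMonoid_mul]
      refine basisFreeMonoid_mem_nonChainSpan fun h => hw (h.infix ?_)
      exact ⟨v.toList, [], by simp⟩
    | zero => simp
    | add _ _ _ _ h₁ h₂ => rw [add_mul]; exact add_mem h₁ h₂
    | smul c _ _ h => rw [smul_mul_assoc]; exact Submodule.smul_mem _ c h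
  | zero => simp
  | add _ _ _ _ h₁ h₂ => rw [mul_add]; exact add_mem h₁ h₂
  | smul c _ _ h => rw [mul_smul_comm]; exact Submodule.smul_mem _ c h

theorem mul_mem_nonChainSpan_right {x : FreeAlgebra R X} (hx : x ∈ nonChainSpan R good)
    (y : FreeAlgebra R X) : x * y ∈ nonChainSpan R good := by
  induction hx using Submodule.span_induction with
  | mem _ hx =>
    obtain ⟨w, hw, rfl⟩ := hx
    induction (basisFreeMonoid R X).mem_span y using Submodule.span_induction with
    | mem _ hy =>
      obtain ⟨v, rfl⟩ := hy
      rw [← basisFreeMonoid_mul]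
      refine basisFreeMonoid_mem_nonChainSpan fun h => hw (h.infix ?_)
      exact ⟨[], v.toList, by simp⟩
    | zero => simp
    | add _ _ _ _ h₁ h₂ => rw [mul_add]; exact add_mem h₁ h₂
    | smul c _ _ h => rw [mul_smul_comm]; exact Submodule.smul_mem _ c h
  | zero => simp
  | add _ _ _ _ h₁ h₂ => rw [add_mul]; exact add_mem h₁ h₂
  | smul c _ _ h => rw [smul_mul_assoc]; exact Submodule.smul_mem _ c h

theorem map_mem_nonChainSpan (d : FreeAlgebra R X →ₗ[R] FreeAlgebra R X) (h_one : d 1 = 0)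
    (h_ι : ∀ i, d (ι R i) ∈ nonChainSpan R good)
    (h_leibniz : ∀ i b, ∃ c : R, d (ι R i * b) = d (ι R i) * b + c • (ι R i * d b))
    (x : FreeAlgebra R X) : d x ∈ nonChainSpan R good := by
  suffices ⊤ ≤ (nonChainSpan R good).comap d from this Submodule.mem_top
  rw [← (basisFreeMonoid R X).span_eq, Submodule.span_le]
  rintro _ ⟨w, rfl⟩
  induction w using FreeMonoid.inductionOn' with
  | one => simp [basisFreeMonoid_apply, h_one]
  | of_mul i w ih =>
    obtain ⟨c, hc⟩ := h_leibniz i (basisFreeMonoid R X w)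
    rw [SetLike.mem_coe, Submodule.mem_comap, basisFreeMonoid_mul, basisFreeMonoid_apply (.of i),
      FreeMonoid.lift_eval_of, hc]
    exact add_mem (mul_mem_nonChainSpan_right (h_ι i) _)
      (Submodule.smul_mem _ c (mul_mem_nonChainSpan_left ih _))

end FreeAlgebra

open FreeAlgebra

def altList {X : Type*} (s t : X) (len : ℕ) : List X :=
  (List.range len).map fun j => if j % 2 = 0 then s else t

section altList

variable {X : Type*} (s t : X)

theorem altList_succ (len : ℕ) : altList s t (len + 1) = s :: altList t s len := by
  simp only [altList, List.range_succ_eq_map, List.map_cons, List.map_map, Nat.zero_mod,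
    if_true, List.cons.injEq, true_and]
  refine List.map_congr_left fun j _ => ?_
  rcases Nat.mod_two_eq_zero_or_one j with h | h <;> simp [h, Nat.add_mod]

theorem head?_altList (len : ℕ) : (altList s t (len + 1)).head? = some s := by
  simp [altList_succ]

theorem getLast?_altList_two_mul_add_one (m : ℕ) :
    (altList s t (2 * m + 1)).getLast? = some s := by
  simp [altList, List.getLast?_range]

theorem isChain_altList (len : ℕ) : (altList s t len).IsChain fun a b => s(a, b) = s(s, t) := by
  induction len generalizing s t with
  | zero => simp [altList]
  | succ len ih =>
    rw [altList_succ]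
    cases len with
    | zero => simp [altList]
    | succ len =>
      rw [altList_succ, List.isChain_cons_cons, ← altList_succ]
      exact ⟨rfl, by simpa [Sym2.eq_swap] using ih t s⟩

end altList

theorem basisFreeMonoid_altList (s t : Fin r) (len : ℕ) :
    basisFreeMonoid k (Fin r) (.ofList (altList s t len)) = altWord k r s t len := by
  rw [basisFreeMonoid_apply, FreeMonoid.lift_apply]
  rfl

theorem deltaQ_snd_apply (d : TV k r →ₗ[k] TV k r) (α : Fin r → Fin r → Fin r → k)
    (Z : QC k r) (t : Fin r) :
    (deltaQ k r d α Z).2 t = d (Z.2 t)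
      + ∑ i, ∑ j, α i j t • (sgn k r (Z.2 i) * FreeAlgebra.ι k j)
      - ∑ i, ∑ l, α i t l • (FreeAlgebra.ι k l * Z.2 i) := by
  simp [deltaQ]

theorem derivation_mem_nonChainSpan (deg : Fin r → ℕ) (d : TV k r →ₗ[k] TV k r)
    (α : Fin r → Fin r → Fin r → k) {s t : Fin r}
    (hα_st : ∀ i, α i s t = 0) (hα_ts : ∀ i, α i t s = 0)
    (hgen : ∀ i, d (FreeAlgebra.ι k i) =
      ∑ j : Fin r, ∑ l : Fin r, α i j l • (FreeAlgebra.ι k j * FreeAlgebra.ι k l))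
    (hLeib : ∀ m : ℕ, ∀ a ∈ Tgr k r deg m, ∀ b : TV k r,
      d (a * b) = d a * b + ((-1 : k) ^ m) • (a * d b))
    (x : TV k r) : d x ∈ nonChainSpan k fun a b => s(a, b) = s(s, t) := by
  have mem_Tgr (w : List (Fin r)) : (w.map (FreeAlgebra.ι k)).prod ∈ Tgr k r deg (w.map deg).sum :=
    Submodule.subset_span ⟨w, rfl, rfl⟩
  refine map_mem_nonChainSpan d ?_ (fun i => ?_)
    (fun i b => ⟨_, by simpa using hLeib _ _ (mem_Tgr [i]) b⟩) x
  · simpa using hLeib 0 1 (mem_Tgr []) 1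
  · rw [hgen]
    refine Submodule.sum_mem _ fun j _ => Submodule.sum_mem _ fun l _ => ?_
    by_cases hjl : s(j, l) = s(s, t)
    · rcases Sym2.eq_iff.mp hjl with ⟨rfl, rfl⟩ | ⟨rfl, rfl⟩ <;> simp [hα_st, hα_ts]
    · refine Submodule.smul_mem _ _ ?_
      have hw : ¬ (FreeMonoid.of j * .of l).toList.IsChain fun a b => s(a, b) = s(s, t) := by
        simpa using hjl
      simpa [basisFreeMonoid_apply] using basisFreeMonoid_mem_nonChainSpan (R := k) hw

theorem repr_deltaQ_snd_eq_zero {d : TV k r →ₗ[k] TV k r} {α : Fin r → Fin r → Fin r → k}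
    {s t : Fin r} (hα_st : ∀ i, α i s t = 0) (hα_ts : ∀ i, α i t s = 0)
    (hd : ∀ x, d x ∈ nonChainSpan k fun a b => s(a, b) = s(s, t))
    {L : List (Fin r)} (hL : L.IsChain fun a b => s(a, b) = s(s, t))
    (hhead : L.head? = some s) (hlast : L.getLast? = some s) (Z : QC k r) :
    (basisFreeMonoid k (Fin r)).repr ((deltaQ k r d α Z).2 t) (.ofList L) = 0 := by
  have h_right (i j : Fin r) : (basisFreeMonoid k (Fin r)).repr
      (α i j t • (sgn k r (Z.2 i) * FreeAlgebra.ι k j)) (.ofList L) = 0 := by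
    rcases eq_or_ne j s with rfl | hj
    · simp [hα_st]
    · rw [map_smul, Finsupp.smul_apply,
        basisFreeMonoid_repr_mul_ι_apply (by simpa [hlast] using hj.symm), smul_zero]
  have h_left (i l : Fin r) : (basisFreeMonoid k (Fin r)).repr
      (α i t l • (FreeAlgebra.ι k l * Z.2 i)) (.ofList L) = 0 := by
    rcases eq_or_ne l s with rfl | hl
    · simp [hα_ts]
    · rw [map_smul, Finsupp.smul_apply,
        basisFreeMonoid_repr_ι_mul_apply (by simpa [hhead] using hl.symm), smul_zero]
  simp only [deltaQ_snd_apply, map_sub, map_add, map_sum, Finsupp.coe_sub, Finsupp.coe_add,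
    Pi.sub_apply, Pi.add_apply, Finsupp.finsetSum_apply, h_right, h_left,
    repr_apply_eq_zero_of_mem_nonChainSpan (hd _) (L := .ofList L) hL, Finset.sum_const_zero,
    add_zero, sub_zero]

/-- **Statement 11.** Let `V` have homogeneous basis `v₁,…,v_r` of odd positive degrees and
let `d` be the degree `−1` derivation of `T(V)` with `dv₁ = dv₂ = 0` and
`dvᵢ = Σ_{j,l} α^i_{jl} vⱼ ⊗ v_l`, where `α^i_{12} = α^i_{21} = 0` for all `i` and
`d ∘ d = 0`.  Then `X_n` is not a boundary in `(Q, δ)`: there is no `Z ∈ Q` with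
`δ(Z) = X_n`. -/
theorem Xcyc_not_boundary
    (k : Type) [Field k] (r : ℕ) (hr : 2 ≤ r)
    (deg : Fin r → ℕ)
    (d : TV k r →ₗ[k] TV k r) (α : Fin r → Fin r → Fin r → k)
    (hα12 : ∀ i, α i ⟨0, by omega⟩ ⟨1, by omega⟩ = 0)
    (hα21 : ∀ i, α i ⟨1, by omega⟩ ⟨0, by omega⟩ = 0)
    (hgen : ∀ i, d (FreeAlgebra.ι k i) =
      ∑ j : Fin r, ∑ l : Fin r, α i j l • (FreeAlgebra.ι k j * FreeAlgebra.ι k l))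
    (hLeib : ∀ m : ℕ, ∀ a ∈ Tgr k r deg m, ∀ b : TV k r,
      d (a * b) = d a * b + ((-1 : k) ^ m) • (a * d b)) :
    ∀ n : ℕ, 1 ≤ n → ¬ ∃ Z : QC k r, deltaQ k r d α Z = Xcyc k r hr n := by
  rintro n hn ⟨Z, hZ⟩
  obtain ⟨m, rfl⟩ : ∃ m, n = m + 1 := ⟨n - 1, by omega⟩
  have hd := derivation_mem_nonChainSpan k r deg d α hα12 hα21 hgen hLeib
  have h_repr := repr_deltaQ_snd_eq_zero k r hα12 hα21 hd (isChain_altList _ _ (2 * m + 1))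
    (head?_altList _ _ _) (getLast?_altList_two_mul_add_one _ _ m) Z
  have hX : (Xcyc k r hr (m + 1)).2 ⟨1, by omega⟩ =
      basisFreeMonoid k (Fin r) (.ofList (altList ⟨0, by omega⟩ ⟨1, by omega⟩ (2 * m + 1))) := by
    simp [Xcyc, basisFreeMonoid_altList, show 2 * (m + 1) - 1 = 2 * m + 1 by omega]
  rw [hZ, hX, Module.Basis.repr_self, Finsupp.single_eq_same] at h_repr
  exact one_ne_zero h_repr
end
end
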